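/- arXiv:math/0608499 — 6 statements merged into one kernel-verified Lean document; each statement's English description precedes it below -/
import Mathlib

section
/- Let n ≥ 3 and let z = (z₁,…,zₙ) ∈ ℝⁿ satisfy Σᵢ zᵢ = 0 and Σᵢ zᵢ² = n. Then ∫₀^∞ ∫_{-∞}^∞ ∏_{i=1}^n φ(a + b·zᵢ) · b^{n-2} da db = Γ((n-1)/2) / (2 · n^{n/2} · π^{(n-1)/2}), where φ(x) = (2π)^{-1/2} exp(−x²/2) is the standard normal density. -/
/-! Since `∑ zᵢ = 0` and `∑ zᵢ² = n`, the cross terms cancel and `∑ (a + b zᵢ)² = n (a² + b²)`, so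
the likelihood factors as `(2π)^(-n/2) e^(-n a²/2) e^(-n b²/2)`. The integral over `a` is the
Gaussian integral `√(2π/n)`, and the integral of `b^(n-2) e^(-n b²/2)` over `b > 0` is a Gamma
integral, `Γ((n-1)/2) / (2 (n/2)^((n-1)/2))`. -/

open Real MeasureTheory Finset

lemma sum_sq_add_mul_of_sum_eq_zero {ι : Type*} [Fintype ι] {z : ι → ℝ} (hz : ∑ i, z i = 0)
    (a b : ℝ) : ∑ i, (a + b * z i) ^ 2 = Fintype.card ι * a ^ 2 + b ^ 2 * ∑ i, z i ^ 2 := by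
  have hexpand : ∀ i, (a + b * z i) ^ 2 = a ^ 2 + 2 * a * b * z i + b ^ 2 * z i ^ 2 :=
    fun i => by ring
  simp only [hexpand, sum_add_distrib, ← mul_sum, hz, sum_const, card_univ, nsmul_eq_mul]
  ring

lemma prod_normal_density_of_sum_eq_zero {ι : Type*} [Fintype ι] {z : ι → ℝ}
    (hz : ∑ i, z i = 0) (a b : ℝ) :
    ∏ i, (√(2 * π))⁻¹ * exp (-(a + b * z i) ^ 2 / 2) =
      (√(2 * π))⁻¹ ^ Fintype.card ι * exp (-(Fintype.card ι / 2) * a ^ 2) *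
        exp (-((∑ i, z i ^ 2) / 2) * b ^ 2) := by
  rw [prod_mul_distrib, prod_const, card_univ, ← exp_sum, mul_assoc, ← exp_add]
  congr 2
  simp only [neg_div, sum_neg_distrib, ← sum_div, sum_sq_add_mul_of_sum_eq_zero hz]
  ring

lemma integral_pow_mul_exp_neg_mul_sq_Ioi (m : ℕ) {c : ℝ} (hc : 0 < c) :
    ∫ x in Set.Ioi (0 : ℝ), x ^ m * exp (-c * x ^ 2) =
      Gamma ((m + 1) / 2) / (2 * c ^ (((m : ℝ) + 1) / 2)) := by
  have hrpow : ∀ x : ℝ, x ^ m * exp (-c * x ^ 2) = x ^ (m : ℝ) * exp (-c * x ^ (2 : ℝ)) :=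
    fun x => by rw [rpow_natCast, rpow_two]
  simp only [hrpow]
  rw [integral_rpow_mul_exp_neg_mul_rpow two_pos (by linarith [m.cast_nonneg (α := ℝ)]) hc,
    neg_div, rpow_neg hc.le]
  field_simp

/- Both sides are products of powers of `2`, `π` and `n`, so the identity becomes linear after
taking logarithms. -/
lemma normal_likelihood_const {n : ℕ} (hn : 0 < n) :
    (√(2 * π))⁻¹ ^ n * √(π / (n / 2)) / (2 * ((n : ℝ) / 2) ^ (((n : ℝ) - 1) / 2)) =
      1 / (2 * (n : ℝ) ^ ((n : ℝ) / 2) * π ^ (((n : ℝ) - 1) / 2)) := by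
  have hn_pos : (0 : ℝ) < n := by exact_mod_cast hn
  have hπ := pi_pos
  refine log_injOn_pos (by simp only [Set.mem_Ioi]; positivity)
    (by simp only [Set.mem_Ioi]; positivity) ?_
  simp (disch := positivity) only [log_mul, log_div, log_rpow, log_pow, log_inv, log_sqrt, log_one]
  ring

/-- For `n ≥ 3` and a standardized vector `z` (`∑ zᵢ = 0`, `∑ zᵢ² = n`),
the integrated normal likelihood over location `a` and scale `b > 0` with weight `b^(n-2)`
equals `Γ((n-1)/2) / (2 n^{n/2} π^{(n-1)/2})`, where `φ` is the standard normal density. -/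
theorem integrated_normal_likelihood (n : ℕ) (hn : 3 ≤ n) (z : Fin n → ℝ)
    (hz1 : ∑ i, z i = 0) (hz2 : ∑ i, (z i) ^ 2 = (n : ℝ)) :
    (∫ b in Set.Ioi (0 : ℝ), ∫ a : ℝ,
        (∏ i, (Real.sqrt (2 * Real.pi))⁻¹ * Real.exp (-(a + b * z i) ^ 2 / 2)) * b ^ (n - 2))
      = Real.Gamma (((n : ℝ) - 1) / 2) /
          (2 * (n : ℝ) ^ ((n : ℝ) / 2) * Real.pi ^ (((n : ℝ) - 1) / 2)) := by
  have hexponent : (((n - 2 : ℕ) : ℝ) + 1) = n - 1 := by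
    rw [Nat.cast_sub (by omega)]; push_cast; ring
  have hlik : ∀ a b : ℝ,
      (∏ i, (√(2 * π))⁻¹ * exp (-(a + b * z i) ^ 2 / 2)) * b ^ (n - 2) =
        (√(2 * π))⁻¹ ^ n * (b ^ (n - 2) * exp (-(n / 2) * b ^ 2)) * exp (-(n / 2) * a ^ 2) := by
    intro a b
    rw [prod_normal_density_of_sum_eq_zero hz1, hz2, Fintype.card_fin]
    ring
  simp only [hlik, integral_const_mul, integral_gaussian]
  rw [integral_mul_const, integral_const_mul,
    integral_pow_mul_exp_neg_mul_sq_Ioi _ (by positivity), hexponent]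
  conv_rhs => rw [div_eq_mul_one_div, ← normal_likelihood_const (by omega)]
  ring
end

section
/- Let n ≥ 3, let c₀ > 0, c₁, c₂, c₃ ∈ ℝ, and let h(x) = c₀x³ + c₁x² + c₂x + c₃. Then there exists a constant B ∈ ℝ, depending only on n and c₀,…,c₃ (not on z), such that for every z ∈ ℝⁿ with Σᵢ zᵢ = 0 and Σᵢ zᵢ² = n: ∫₀^∞ ∫_{-∞}^∞ Σ_{i=1}^n h(a + b·zᵢ) · exp(−n(a²+b²)/2) · b^{n−2} da db = c₀ · 2^{(n+1)/2} · √π · Γ((n+2)/2) · n^{−(n+3)/2} · Σ_{i=1}^n zᵢ³ + B. In particular the locally best invariant statistic for a cubic score function is a strictly increasing affine function of the sample skewness Σᵢ zᵢ³. -/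
open MeasureTheory

open Real Set in
private lemma my_integral_comp_neg (f : ℝ → ℝ) : ∫ x : ℝ, f (-x) = ∫ x : ℝ, f x := by
  have A : MeasurableEmbedding (fun x : ℝ => -x) :=
    (Homeomorph.neg ℝ).isClosedEmbedding.measurableEmbedding
  conv_rhs => rw [← Measure.map_neg_eq_self (volume : Measure ℝ)]
  exact (A.integral_map f).symm

open Real Set in
private lemma my_odd_integral_zero {f : ℝ → ℝ} (h : ∀ x, f (-x) = - f x) :
    ∫ x : ℝ, f x = 0 := by
  have h1 := my_integral_comp_neg f
  simp_rw [h, integral_neg] at h1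
  linarith

open Real Set in
private lemma my_integrable_pow_gauss {k : ℝ} (hk : 0 < k) (j : ℕ) :
    Integrable fun x : ℝ => x ^ j * Real.exp (-k * x ^ 2) := by
  have := integrable_rpow_mul_exp_neg_mul_sq hk (s := (j : ℝ))
    (by have := Nat.cast_nonneg (α := ℝ) j; linarith)
  simpa [Real.rpow_natCast] using this

open Real Set in
private lemma my_Ioi_moment {k : ℝ} (hk : 0 < k) (j : ℕ) :
    ∫ x in Ioi (0:ℝ), x ^ j * Real.exp (-k * x ^ 2)
      = k ^ (-((j:ℝ)+1)/2) * (1/2) * Real.Gamma (((j:ℝ)+1)/2) := by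
  have h2 : ∀ x : ℝ, x ^ (2:ℝ) = x ^ (2:ℕ) := fun x => by
    rw [show (2:ℝ) = ((2:ℕ):ℝ) by norm_num, Real.rpow_natCast]
  have := integral_rpow_mul_exp_neg_mul_rpow (p := 2) (q := (j:ℝ)) (b := k)
    two_pos (by have := Nat.cast_nonneg (α := ℝ) j; linarith) hk
  simp only [h2, Real.rpow_natCast] at this
  rw [this]

open Real Set in
private lemma my_integral_comp_abs' {f : ℝ → ℝ} (h : ∀ x : ℝ, f |x| = f x) :
    ∫ x : ℝ, f x = 2 * ∫ x in Ioi (0:ℝ), f x := by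
  rw [← integral_comp_abs (f := f)]
  simp_rw [h]

open Real Set in
private lemma my_M2 {k : ℝ} (hk : 0 < k) :
    ∫ x : ℝ, x ^ 2 * Real.exp (-k * x ^ 2)
      = k ^ (-(3:ℝ)/2) * Real.Gamma (3/2) := by
  have h2 : ∀ x : ℝ, x ^ (2:ℝ) = x ^ (2:ℕ) := fun x => by
    rw [show (2:ℝ) = ((2:ℕ):ℝ) by norm_num, Real.rpow_natCast]
  have habs : ∀ x : ℝ, |x| ^ 2 * Real.exp (-k * |x| ^ 2) = x ^ 2 * Real.exp (-k * x ^ 2) := by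
    intro x; rw [sq_abs]
  rw [my_integral_comp_abs' habs]
  have := integral_rpow_mul_exp_neg_mul_rpow (p := 2) (q := (2:ℝ)) (b := k)
    two_pos (by norm_num) hk
  simp only [h2] at this
  rw [this]; norm_num; ring

open Real Set in
private lemma my_inner_int {k : ℝ} (hk : 0 < k) (A₀ A₁ A₂ A₃ : ℝ) :
    ∫ a : ℝ, (A₀ + A₁ * a + A₂ * a ^ 2 + A₃ * a ^ 3) * Real.exp (-k * a ^ 2)
      = A₀ * Real.sqrt (π / k) + A₂ * (k ^ (-(3:ℝ)/2) * Real.Gamma (3/2)) := by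
  have i0 : Integrable fun a : ℝ => Real.exp (-k * a ^ 2) := integrable_exp_neg_mul_sq hk
  have ij := fun j => my_integrable_pow_gauss hk j
  have hfun : (fun a : ℝ => (A₀ + A₁ * a + A₂ * a ^ 2 + A₃ * a ^ 3) * Real.exp (-k * a ^ 2))
      = fun a : ℝ => (A₀ * Real.exp (-k * a ^ 2) + A₁ * (a ^ 1 * Real.exp (-k * a ^ 2)))
        + (A₂ * (a ^ 2 * Real.exp (-k * a ^ 2)) + A₃ * (a ^ 3 * Real.exp (-k * a ^ 2))) := by
    funext a; ring
  have I1 : Integrable (fun a : ℝ => A₀ * Real.exp (-k * a ^ 2)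
      + A₁ * (a ^ 1 * Real.exp (-k * a ^ 2))) volume :=
    (i0.const_mul A₀).add ((ij 1).const_mul A₁)
  have I2 : Integrable (fun a : ℝ => A₂ * (a ^ 2 * Real.exp (-k * a ^ 2))
      + A₃ * (a ^ 3 * Real.exp (-k * a ^ 2))) volume :=
    ((ij 2).const_mul A₂).add ((ij 3).const_mul A₃)
  rw [hfun, integral_add I1 I2,
    integral_add (i0.const_mul A₀) ((ij 1).const_mul A₁),
    integral_add ((ij 2).const_mul A₂) ((ij 3).const_mul A₃),
    MeasureTheory.integral_const_mul, MeasureTheory.integral_const_mul,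
    MeasureTheory.integral_const_mul, MeasureTheory.integral_const_mul]
  have m1 : ∫ a : ℝ, a ^ 1 * Real.exp (-k * a ^ 2) = 0 :=
    my_odd_integral_zero (fun x => by rw [neg_sq]; ring)
  have m3 : ∫ a : ℝ, a ^ 3 * Real.exp (-k * a ^ 2) = 0 :=
    my_odd_integral_zero (fun x => by rw [neg_sq]; ring)
  rw [m1, m3, integral_gaussian, my_M2 hk]
  ring

open Real Set in
private lemma my_coeff {x : ℝ} (hx : 0 < x) :
    Real.sqrt (π / (x/2)) * ((x/2) ^ (-(x+2)/2) * (1/2) * Real.Gamma ((x+2)/2))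
      = 2 ^ ((x+1)/2) * Real.sqrt π * Real.Gamma ((x+2)/2) * x ^ (-(x+3)/2) := by
  have hx2 : (0:ℝ) < x/2 := by positivity
  have hs : Real.sqrt (π / (x/2)) = Real.sqrt π * (x/2) ^ (-(1/2) : ℝ) := by
    rw [Real.sqrt_eq_rpow, Real.div_rpow pi_pos.le hx2.le, div_eq_mul_inv,
      ← Real.rpow_neg hx2.le, ← Real.sqrt_eq_rpow]
  have hmerge : (x/2) ^ ((-(1/2) : ℝ)) * (x/2) ^ (-(x+2)/2) = (x/2) ^ (-(x+3)/2) := by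
    rw [← Real.rpow_add hx2]
    congr 1
    ring
  have hsplit : (x/2) ^ (-(x+3)/2) = x ^ (-(x+3)/2) * 2 ^ ((x+3)/2) := by
    rw [Real.div_rpow hx.le (by norm_num : (0:ℝ) ≤ 2), div_eq_mul_inv]
    congr 1
    conv_rhs => rw [show (x+3)/2 = -(-(x+3)/2) by ring]
    rw [Real.rpow_neg (by norm_num : (0:ℝ) ≤ 2)]
  have h23 : (2:ℝ) ^ ((x+3)/2) = 2 ^ ((x+1)/2) * 2 := by
    rw [show (x+3)/2 = (x+1)/2 + 1 by ring, Real.rpow_add two_pos, Real.rpow_one]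
  rw [hs]
  rw [show Real.sqrt π * (x/2) ^ (-(1/2) : ℝ) * ((x/2) ^ (-(x+2)/2) * (1/2) * Real.Gamma ((x+2)/2))
      = Real.sqrt π * ((x/2) ^ ((-(1/2)) : ℝ) * (x/2) ^ (-(x+2)/2)) * (1/2) * Real.Gamma ((x+2)/2)
    from by ring, hmerge, hsplit, h23]
  ring

/-- for a cubic score function `h(x) = c₀x³ + c₁x² + c₂x + c₃` with `c₀ > 0`,
the LBI integral is a strictly increasing affine function of the sample skewness `∑ zᵢ³`:
it equals `c₀ · 2^{(n+1)/2} √π Γ((n+2)/2) n^{-(n+3)/2} ∑ zᵢ³ + B` for a constant `B`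
independent of `z`. -/
theorem lbi_cubic_score (n : ℕ) (hn : 3 ≤ n) (c₀ c₁ c₂ c₃ : ℝ) (hc₀ : 0 < c₀) :
    ∃ B : ℝ, ∀ z : Fin n → ℝ, (∑ i, z i = 0) → (∑ i, (z i) ^ 2 = (n : ℝ)) →
      (∫ b in Set.Ioi (0 : ℝ), ∫ a : ℝ,
          (∑ i, (c₀ * (a + b * z i) ^ 3 + c₁ * (a + b * z i) ^ 2 + c₂ * (a + b * z i) + c₃)) *
            Real.exp (-((n : ℝ) * (a ^ 2 + b ^ 2)) / 2) * b ^ (n - 2))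
        = c₀ * (2 : ℝ) ^ (((n : ℝ) + 1) / 2) * Real.sqrt Real.pi *
            Real.Gamma (((n : ℝ) + 2) / 2) * (n : ℝ) ^ (-((n : ℝ) + 3) / 2) *
            (∑ i, (z i) ^ 3) + B := by
  have hn0 : (0:ℝ) < (n:ℝ) := by
    have : 0 < n := lt_of_lt_of_le (by norm_num) hn
    exact_mod_cast this
  have hk : (0:ℝ) < (n:ℝ)/2 := by positivity
  refine ⟨Real.sqrt (Real.pi / ((n:ℝ)/2)) * ((n:ℝ)*c₁) *
      (((n:ℝ)/2) ^ (-(((n-2+2:ℕ):ℝ)+1)/2) * (1/2) * Real.Gamma ((((n-2+2:ℕ):ℝ)+1)/2))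
    + (Real.sqrt (Real.pi / ((n:ℝ)/2)) * ((n:ℝ)*c₃)
        + ((n:ℝ)*c₁) * (((n:ℝ)/2) ^ (-(3:ℝ)/2) * Real.Gamma (3/2))) *
      (((n:ℝ)/2) ^ (-(((n-2:ℕ):ℝ)+1)/2) * (1/2) * Real.Gamma ((((n-2:ℕ):ℝ)+1)/2)), ?_⟩
  intro z hz1 hz2
  set S : ℝ := ∑ i, (z i) ^ 3 with hS
  -- pointwise algebraic identity for the sum
  have hsum : ∀ a b : ℝ,
      (∑ i, (c₀ * (a + b * z i) ^ 3 + c₁ * (a + b * z i) ^ 2 + c₂ * (a + b * z i) + c₃))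
        = ((n:ℝ)*c₁*b^2 + (n:ℝ)*c₃ + c₀*S*b^3) + (3*(n:ℝ)*c₀*b^2 + (n:ℝ)*c₂)*a
          + ((n:ℝ)*c₁)*a^2 + ((n:ℝ)*c₀)*a^3 := by
    intro a b
    have e : ∀ i : Fin n, c₀ * (a + b * z i) ^ 3 + c₁ * (a + b * z i) ^ 2
        + c₂ * (a + b * z i) + c₃
        = (c₀*a^3 + c₁*a^2 + c₂*a + c₃) + (3*c₀*a^2*b + 2*c₁*a*b + c₂*b) * z i
          + (3*c₀*a*b^2 + c₁*b^2) * (z i)^2 + (c₀*b^3) * (z i)^3 := fun i => by ring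
    rw [Finset.sum_congr rfl (fun i _ => e i)]
    simp only [Finset.sum_add_distrib, ← Finset.mul_sum, hz1, hz2, ← hS,
      Finset.sum_const, Finset.card_univ, Fintype.card_fin, nsmul_eq_mul]
    ring
  -- inner integral
  have hinner : ∀ b : ℝ,
      (∫ a : ℝ,
        (∑ i, (c₀ * (a + b * z i) ^ 3 + c₁ * (a + b * z i) ^ 2 + c₂ * (a + b * z i) + c₃)) *
          Real.exp (-((n : ℝ) * (a ^ 2 + b ^ 2)) / 2) * b ^ (n - 2))
      = (((n:ℝ)*c₁*b^2 + (n:ℝ)*c₃ + c₀*S*b^3) * Real.sqrt (Real.pi / ((n:ℝ)/2))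
          + ((n:ℝ)*c₁) * (((n:ℝ)/2) ^ (-(3:ℝ)/2) * Real.Gamma (3/2)))
        * (Real.exp (-((n:ℝ)/2) * b ^ 2) * b ^ (n - 2)) := by
    intro b
    have hfun : (fun a : ℝ =>
        (∑ i, (c₀ * (a + b * z i) ^ 3 + c₁ * (a + b * z i) ^ 2 + c₂ * (a + b * z i) + c₃)) *
          Real.exp (-((n : ℝ) * (a ^ 2 + b ^ 2)) / 2) * b ^ (n - 2))
        = fun a : ℝ =>
          ((((n:ℝ)*c₁*b^2 + (n:ℝ)*c₃ + c₀*S*b^3) + (3*(n:ℝ)*c₀*b^2 + (n:ℝ)*c₂)*a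
            + ((n:ℝ)*c₁)*a^2 + ((n:ℝ)*c₀)*a^3) * Real.exp (-((n:ℝ)/2) * a ^ 2))
          * (Real.exp (-((n:ℝ)/2) * b ^ 2) * b ^ (n - 2)) := by
      funext a
      rw [hsum a b,
        show Real.exp (-((n : ℝ) * (a ^ 2 + b ^ 2)) / 2)
          = Real.exp (-((n:ℝ)/2) * a ^ 2) * Real.exp (-((n:ℝ)/2) * b ^ 2) from by
            rw [← Real.exp_add]; congr 1; ring]
      ring
    rw [hfun, MeasureTheory.integral_mul_const, my_inner_int hk]
  rw [MeasureTheory.setIntegral_congr_fun measurableSet_Ioi (fun b _ => hinner b)]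
  -- split outer integrand
  have hg : ∀ b : ℝ,
      (((n:ℝ)*c₁*b^2 + (n:ℝ)*c₃ + c₀*S*b^3) * Real.sqrt (Real.pi / ((n:ℝ)/2))
          + ((n:ℝ)*c₁) * (((n:ℝ)/2) ^ (-(3:ℝ)/2) * Real.Gamma (3/2)))
        * (Real.exp (-((n:ℝ)/2) * b ^ 2) * b ^ (n - 2))
      = (Real.sqrt (Real.pi / ((n:ℝ)/2)) * c₀ * S)
          * (b ^ (n-2+3) * Real.exp (-((n:ℝ)/2) * b ^ 2))
        + ((Real.sqrt (Real.pi / ((n:ℝ)/2)) * ((n:ℝ)*c₁))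
            * (b ^ (n-2+2) * Real.exp (-((n:ℝ)/2) * b ^ 2))
          + (Real.sqrt (Real.pi / ((n:ℝ)/2)) * ((n:ℝ)*c₃)
              + ((n:ℝ)*c₁) * (((n:ℝ)/2) ^ (-(3:ℝ)/2) * Real.Gamma (3/2)))
            * (b ^ (n-2) * Real.exp (-((n:ℝ)/2) * b ^ 2))) := by
    intro b
    rw [pow_add, pow_add]
    ring
  rw [MeasureTheory.setIntegral_congr_fun measurableSet_Ioi (fun b _ => hg b)]
  have J : ∀ (c : ℝ) (j : ℕ), Integrable
      (fun b : ℝ => c * (b ^ j * Real.exp (-((n:ℝ)/2) * b ^ 2)))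
      (volume.restrict (Set.Ioi 0)) :=
    fun c j => ((my_integrable_pow_gauss hk j).restrict).const_mul c
  have J23 : Integrable (fun b : ℝ =>
      Real.sqrt (Real.pi/((n:ℝ)/2)) * ((n:ℝ)*c₁) * (b ^ (n-2+2) * Real.exp (-((n:ℝ)/2)*b^2))
      + (Real.sqrt (Real.pi/((n:ℝ)/2)) * ((n:ℝ)*c₃)
          + ((n:ℝ)*c₁) * (((n:ℝ)/2) ^ (-(3:ℝ)/2) * Real.Gamma (3/2)))
        * (b ^ (n-2) * Real.exp (-((n:ℝ)/2)*b^2))) (volume.restrict (Set.Ioi 0)) :=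
    (J _ (n-2+2)).add (J _ (n-2))
  rw [MeasureTheory.integral_add (J _ (n-2+3)) J23,
    MeasureTheory.integral_add (J _ (n-2+2)) (J _ (n-2)),
    MeasureTheory.integral_const_mul, MeasureTheory.integral_const_mul,
    MeasureTheory.integral_const_mul,
    my_Ioi_moment hk (n-2+3), my_Ioi_moment hk (n-2+2), my_Ioi_moment hk (n-2)]
  -- cast arithmetic for the leading exponent
  have hc1 : ((n-2+3 : ℕ) : ℝ) + 1 = (n:ℝ) + 2 := by
    have h : n-2+3 = n+1 := by omega
    rw [h]; push_cast; ring
  rw [hc1]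
  have hco := my_coeff hn0
  linear_combination (c₀ * S) * hco
end

section
/- Let n ≥ 3, let c₀ > 0, c₁, c₂ ∈ ℝ, and let h(x) = c₀x⁴ + c₁x² + c₂ (a fourth degree polynomial without odd degree terms). Then there exists a constant B ∈ ℝ, depending only on n and c₀, c₁, c₂ (not on z), such that for every z ∈ ℝⁿ with Σᵢ zᵢ = 0 and Σᵢ zᵢ² = n: ∫₀^∞ ∫_{-∞}^∞ Σ_{i=1}^n h(a + b·zᵢ) · exp(−n(a²+b²)/2) · b^{n−2} da db = c₀ · 2^{(n+2)/2} · √π · Γ((n+3)/2) · n^{−(n+4)/2} · Σ_{i=1}^n zᵢ⁴ + B. In particular the locally best invariant statistic for an even quartic score function is a strictly increasing affine function of the sample kurtosis Σᵢ zᵢ⁴. -/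
open MeasureTheory

noncomputable def gaussMoment (c : ℝ) (k : ℕ) : ℝ := ∫ x : ℝ, x ^ k * Real.exp (-c * x ^ 2)

noncomputable def gaussHalf (c : ℝ) (m : ℕ) : ℝ :=
  ∫ x in Set.Ioi (0 : ℝ), x ^ m * Real.exp (-c * x ^ 2)

lemma gaussMoment_def (c : ℝ) (k : ℕ) :
    gaussMoment c k = ∫ x : ℝ, x ^ k * Real.exp (-c * x ^ 2) := rfl

lemma gaussHalf_def (c : ℝ) (m : ℕ) :
    gaussHalf c m = ∫ x in Set.Ioi (0 : ℝ), x ^ m * Real.exp (-c * x ^ 2) := rfl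

lemma integrable_pow_mul_exp_neg_mul_sq' {c : ℝ} (hc : 0 < c) (k : ℕ) :
    Integrable fun x : ℝ => x ^ k * Real.exp (-c * x ^ 2) := by
  have hk : (-1 : ℝ) < (k : ℝ) := lt_of_lt_of_le neg_one_lt_zero (Nat.cast_nonneg k)
  simpa [Real.rpow_natCast] using integrable_rpow_mul_exp_neg_mul_sq hc hk

lemma gaussHalf_integrableOn {c : ℝ} (hc : 0 < c) (m : ℕ) :
    IntegrableOn (fun x : ℝ => x ^ m * Real.exp (-c * x ^ 2)) (Set.Ioi 0) :=
  (integrable_pow_mul_exp_neg_mul_sq' hc m).integrableOn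

lemma gaussHalf_eq {c : ℝ} (hc : 0 < c) (m : ℕ) :
    gaussHalf c m = (1 / 2) * c ^ (-(((m : ℝ) + 1) / 2)) * Real.Gamma (((m : ℝ) + 1) / 2) := by
  have hq : (-1 : ℝ) < (m : ℝ) := lt_of_lt_of_le neg_one_lt_zero (Nat.cast_nonneg m)
  have h := integral_rpow_mul_exp_neg_mul_rpow (p := 2) (q := (m : ℝ)) (b := c) two_pos hq hc
  rw [gaussHalf_def]
  rw [show (fun x : ℝ => x ^ m * Real.exp (-c * x ^ 2))
      = fun x : ℝ => x ^ (m : ℝ) * Real.exp (-c * x ^ (2 : ℝ)) from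
    funext fun x => by rw [Real.rpow_natCast, Real.rpow_two], h, neg_div]
  ring

lemma gaussMoment_zero {c : ℝ} (hc : 0 < c) :
    gaussMoment c 0 = Real.sqrt (Real.pi / c) := by
  rw [gaussMoment_def]
  simpa using integral_gaussian c

lemma gaussMoment_one {c : ℝ} (hc : 0 < c) : gaussMoment c 1 = 0 := by
  rw [gaussMoment_def]
  simp only [pow_one]
  have hint : Integrable fun x : ℝ => x * Real.exp (-c * x ^ 2) :=
    integrable_mul_exp_neg_mul_sq hc
  have hsplit : (∫ x : ℝ, x * Real.exp (-c * x ^ 2))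
      = (∫ x in Set.Iic (0 : ℝ), x * Real.exp (-c * x ^ 2))
        + ∫ x in Set.Ioi (0 : ℝ), x * Real.exp (-c * x ^ 2) := by
    rw [← setIntegral_union (Set.Iic_disjoint_Ioi le_rfl) measurableSet_Ioi
      hint.integrableOn hint.integrableOn, Set.Iic_union_Ioi, setIntegral_univ]
  have hneg : (∫ x in Set.Iic (0 : ℝ), x * Real.exp (-c * x ^ 2))
      = - ∫ x in Set.Ioi (0 : ℝ), x * Real.exp (-c * x ^ 2) := by
    have h := integral_comp_neg_Iic (0 : ℝ) (fun x => x * Real.exp (-c * x ^ 2))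
    simp only [neg_zero, neg_sq, neg_mul] at h ⊢
    rw [← h, integral_neg]
    simp
  rw [hsplit, hneg, neg_add_cancel]

lemma integral_add_three {μ : Measure ℝ} {f g h : ℝ → ℝ} (hf : Integrable f μ)
    (hg : Integrable g μ) (hh : Integrable h μ) :
    ∫ a, (f a + g a + h a) ∂μ = (∫ a, f a ∂μ) + (∫ a, g a ∂μ) + (∫ a, h a ∂μ) := by
  have h2 : Integrable (fun a => f a + g a) μ := hf.add hg
  rw [integral_add h2 hh, integral_add hf hg]

lemma integral_add_four {μ : Measure ℝ} {f g h k : ℝ → ℝ} (hf : Integrable f μ)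
    (hg : Integrable g μ) (hh : Integrable h μ) (hk : Integrable k μ) :
    ∫ a, (f a + g a + h a + k a) ∂μ
      = (∫ a, f a ∂μ) + (∫ a, g a ∂μ) + (∫ a, h a ∂μ) + (∫ a, k a ∂μ) := by
  have h2 : Integrable (fun a => f a + g a) μ := hf.add hg
  have h3 : Integrable (fun a => f a + g a + h a) μ := h2.add hh
  rw [integral_add h3 hk, integral_add h2 hh, integral_add hf hg]

/-- for an even quartic score function `h(x) = c₀x⁴ + c₁x² + c₂` with `c₀ > 0`,
the LBI integral is a strictly increasing affine function of the sample kurtosis `∑ zᵢ⁴`: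
it equals `c₀ · 2^{(n+2)/2} √π Γ((n+3)/2) n^{-(n+4)/2} ∑ zᵢ⁴ + B` for a constant `B`
independent of `z`. -/
theorem lbi_quartic_score (n : ℕ) (hn : 3 ≤ n) (c₀ c₁ c₂ : ℝ) (hc₀ : 0 < c₀) :
    ∃ B : ℝ, ∀ z : Fin n → ℝ, (∑ i, z i = 0) → (∑ i, (z i) ^ 2 = (n : ℝ)) →
      (∫ b in Set.Ioi (0 : ℝ), ∫ a : ℝ,
          (∑ i, (c₀ * (a + b * z i) ^ 4 + c₁ * (a + b * z i) ^ 2 + c₂)) *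
            Real.exp (-((n : ℝ) * (a ^ 2 + b ^ 2)) / 2) * b ^ (n - 2))
        = c₀ * (2 : ℝ) ^ (((n : ℝ) + 2) / 2) * Real.sqrt Real.pi *
            Real.Gamma (((n : ℝ) + 3) / 2) * (n : ℝ) ^ (-((n : ℝ) + 4) / 2) *
            (∑ i, (z i) ^ 4) + B := by
  have hn0 : (0 : ℝ) < (n : ℝ) := by exact_mod_cast (by omega : 0 < n)
  set c : ℝ := (n : ℝ) / 2 with hcdef
  have hc : 0 < c := by positivity
  refine ⟨(c₂ * n * gaussMoment c 0 + c₁ * n * gaussMoment c 2 + c₀ * n * gaussMoment c 4) *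
      gaussHalf c (n - 2)
      + (c₁ * n * gaussMoment c 0 + 6 * c₀ * n * gaussMoment c 2) * gaussHalf c n, ?_⟩
  intro z hz1 hz2
  have hM : ∀ k : ℕ, Integrable fun x : ℝ => x ^ k * Real.exp (-c * x ^ 2) :=
    fun k => integrable_pow_mul_exp_neg_mul_sq' hc k
  have inner_eq : ∀ b : ℝ,
      (∫ a : ℝ, (∑ i, (c₀ * (a + b * z i) ^ 4 + c₁ * (a + b * z i) ^ 2 + c₂)) *
        Real.exp (-((n : ℝ) * (a ^ 2 + b ^ 2)) / 2) * b ^ (n - 2))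
      = (c₂ * n * gaussMoment c 0 + c₁ * n * gaussMoment c 2 + c₀ * n * gaussMoment c 4) *
          (b ^ (n - 2) * Real.exp (-c * b ^ 2))
        + (c₁ * n * gaussMoment c 0 + 6 * c₀ * n * gaussMoment c 2) *
          (b ^ n * Real.exp (-c * b ^ 2))
        + (c₀ * (∑ i, (z i) ^ 4) * gaussMoment c 0) *
          (b ^ (n + 2) * Real.exp (-c * b ^ 2)) := by
    intro b
    have hsum : ∀ a : ℝ, (∑ i, (c₀ * (a + b * z i) ^ 4 + c₁ * (a + b * z i) ^ 2 + c₂))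
        = (c₀ * a ^ 4 + 6 * c₀ * a ^ 2 * b ^ 2 + c₁ * a ^ 2 + c₁ * b ^ 2 + c₂) * n
          + (4 * c₀ * a * b ^ 3) * (∑ i, (z i) ^ 3) + (c₀ * b ^ 4) * (∑ i, (z i) ^ 4) := by
      intro a
      have e1 : ∀ i, c₀ * (a + b * z i) ^ 4 + c₁ * (a + b * z i) ^ 2 + c₂
          = (c₀ * a ^ 4 + c₁ * a ^ 2 + c₂) + (4 * c₀ * a ^ 3 * b + 2 * c₁ * a * b) * z i
            + (6 * c₀ * a ^ 2 * b ^ 2 + c₁ * b ^ 2) * (z i) ^ 2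
            + (4 * c₀ * a * b ^ 3) * (z i) ^ 3 + (c₀ * b ^ 4) * (z i) ^ 4 :=
        fun i => by ring
      rw [Finset.sum_congr rfl fun i _ => e1 i]
      simp only [Finset.sum_add_distrib, ← Finset.mul_sum, Finset.sum_const,
        Finset.card_univ, Fintype.card_fin, nsmul_eq_mul, hz1, hz2, mul_zero]
      ring
    have hexp : ∀ a : ℝ, Real.exp (-((n : ℝ) * (a ^ 2 + b ^ 2)) / 2)
        = Real.exp (-c * a ^ 2) * Real.exp (-c * b ^ 2) := by
      intro a
      rw [← Real.exp_add]
      congr 1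
      rw [hcdef]; ring
    have hpt : ∀ a : ℝ,
        (∑ i, (c₀ * (a + b * z i) ^ 4 + c₁ * (a + b * z i) ^ 2 + c₂)) *
          Real.exp (-((n : ℝ) * (a ^ 2 + b ^ 2)) / 2) * b ^ (n - 2)
        = ((c₂ * n + c₁ * n * b ^ 2 + c₀ * (∑ i, (z i) ^ 4) * b ^ 4) * b ^ (n - 2) *
              Real.exp (-c * b ^ 2)) * (a ^ 0 * Real.exp (-c * a ^ 2))
          + ((4 * c₀ * (∑ i, (z i) ^ 3) * b ^ 3) * b ^ (n - 2) * Real.exp (-c * b ^ 2)) *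
              (a ^ 1 * Real.exp (-c * a ^ 2))
          + ((c₁ * n + 6 * c₀ * n * b ^ 2) * b ^ (n - 2) * Real.exp (-c * b ^ 2)) *
              (a ^ 2 * Real.exp (-c * a ^ 2))
          + ((c₀ * n) * b ^ (n - 2) * Real.exp (-c * b ^ 2)) *
              (a ^ 4 * Real.exp (-c * a ^ 2)) := by
      intro a
      rw [hsum a, hexp a]
      ring
    rw [integral_congr_ae (Filter.Eventually.of_forall hpt),
      integral_add_four ((hM 0).const_mul _) ((hM 1).const_mul _) ((hM 2).const_mul _)
        ((hM 4).const_mul _),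
      integral_const_mul _ _, integral_const_mul _ _, integral_const_mul _ _, integral_const_mul _ _,
      ← gaussMoment_def, ← gaussMoment_def, ← gaussMoment_def, ← gaussMoment_def,
      gaussMoment_one hc]
    have hb2 : b ^ n = b ^ (n - 2) * b ^ 2 := by
      rw [← pow_add]; congr 1; omega
    have hb4 : b ^ (n + 2) = b ^ (n - 2) * b ^ 4 := by
      rw [← pow_add]; congr 1; omega
    rw [hb2, hb4]
    ring
  rw [setIntegral_congr_fun measurableSet_Ioi (fun b _ => inner_eq b)]
  have hJ : ∀ m : ℕ, IntegrableOn (fun x : ℝ => x ^ m * Real.exp (-c * x ^ 2)) (Set.Ioi 0) :=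
    fun m => gaussHalf_integrableOn hc m
  rw [integral_add_three ((hJ (n - 2)).const_mul _) ((hJ n).const_mul _)
      ((hJ (n + 2)).const_mul _),
    integral_const_mul _ _, integral_const_mul _ _, integral_const_mul _ _,
    ← gaussHalf_def, ← gaussHalf_def, ← gaussHalf_def]
  have hconst : gaussMoment c 0 * gaussHalf c (n + 2)
      = (2 : ℝ) ^ (((n : ℝ) + 2) / 2) * Real.sqrt Real.pi *
          Real.Gamma (((n : ℝ) + 3) / 2) * (n : ℝ) ^ (-((n : ℝ) + 4) / 2) := by
    rw [gaussMoment_zero hc, gaussHalf_eq hc]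
    have hcast : ((n + 2 : ℕ) : ℝ) = (n : ℝ) + 2 := by push_cast; ring
    rw [hcast]
    have e1 : Real.sqrt (Real.pi / c) = Real.sqrt Real.pi * c ^ (-(1 : ℝ) / 2) := by
      rw [Real.sqrt_div Real.pi_nonneg, Real.sqrt_eq_rpow c, div_eq_mul_inv,
        ← Real.rpow_neg hc.le, neg_div]
    rw [e1]
    have e2 : c ^ (-(1 : ℝ) / 2) * c ^ (-((((n : ℝ) + 2) + 1) / 2))
        = c ^ (-(((n : ℝ) + 4) / 2)) := by
      rw [← Real.rpow_add hc]
      congr 1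
      ring
    have e3 : c ^ (-(((n : ℝ) + 4) / 2))
        = (n : ℝ) ^ (-(((n : ℝ) + 4) / 2)) * (2 : ℝ) ^ (((n : ℝ) + 4) / 2) := by
      rw [show c = (n : ℝ) * 2⁻¹ from by rw [hcdef]; ring,
        Real.mul_rpow hn0.le (by norm_num : (0:ℝ) ≤ 2⁻¹),
        Real.inv_rpow (by norm_num : (0:ℝ) ≤ 2), ← Real.rpow_neg (by norm_num : (0:ℝ) ≤ 2),
        neg_neg]
    have e4 : (2 : ℝ) ^ (((n : ℝ) + 4) / 2) = (2 : ℝ) ^ (((n : ℝ) + 2) / 2) * 2 := by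
      rw [show ((n : ℝ) + 4) / 2 = ((n : ℝ) + 2) / 2 + 1 from by ring,
        Real.rpow_add (by norm_num : (0:ℝ) < 2), Real.rpow_one]
    calc Real.sqrt Real.pi * c ^ (-(1:ℝ)/2) *
          ((1:ℝ)/2 * c ^ (-((((n : ℝ) + 2) + 1) / 2)) * Real.Gamma ((((n : ℝ) + 2) + 1) / 2))
        = (c ^ (-(1:ℝ)/2) * c ^ (-((((n : ℝ) + 2) + 1) / 2))) *
          ((1:ℝ)/2 * Real.sqrt Real.pi * Real.Gamma ((((n : ℝ) + 2) + 1) / 2)) := by ring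
      _ = _ := by
          rw [e2, e3, e4, show (((n : ℝ) + 2) + 1) / 2 = ((n : ℝ) + 3) / 2 from by ring]
          ring
  linear_combination (c₀ * (∑ i, (z i) ^ 4)) * hconst
end

section
/- Let n ≥ 3, let k ≥ 3 and let h(x) = Σ_{j=0}^k c_{k−j} x^j be a polynomial with real coefficients. Then there exists a constant B ∈ ℝ, depending only on n and the coefficients (not on z), such that for every z ∈ ℝⁿ with Σᵢ zᵢ = 0 and Σᵢ zᵢ² = n: ∫₀^∞ ∫_{-∞}^∞ Σ_{i=1}^n h(a + b·zᵢ) · exp(−n(a²+b²)/2) · b^{n−2} da db = Σ_{j=3}^k c_{k−j} · Σ_{l even, 0 ≤ l ≤ j−3} binom(j,l) · 2^{(n+j−2)/2} · n^{−(n+j)/2} · Γ((l+1)/2) · Γ((n+j−l−1)/2) · Σ_{i=1}^n zᵢ^{j−l} + B. -/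
open MeasureTheory

section LBIAux
open Real Set

lemma myInt (m : ℕ) {c : ℝ} (hc : 0 < c) :
    Integrable (fun x : ℝ => x ^ m * Real.exp (-c * x ^ 2)) := by
  have h := integrable_rpow_mul_exp_neg_mul_sq hc (s := (m : ℝ))
    (lt_of_lt_of_le neg_one_lt_zero (Nat.cast_nonneg m))
  simpa [Real.rpow_natCast] using h

lemma myOdd {c : ℝ} {m : ℕ} (hm : Odd m) :
    ∫ x : ℝ, x ^ m * Real.exp (-c * x ^ 2) = 0 := by
  have key : (fun x : ℝ => (-x) ^ m * Real.exp (-c * (-x) ^ 2))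
      = fun x : ℝ => -(x ^ m * Real.exp (-c * x ^ 2)) := by
    funext x; rw [hm.neg_pow, neg_sq]; ring
  have h := MeasureTheory.integral_neg_eq_self
    (fun x : ℝ => x ^ m * Real.exp (-c * x ^ 2)) volume
  rw [key] at h
  rw [integral_neg] at h
  linarith

lemma myIoi (m : ℕ) {c : ℝ} (hc : 0 < c) :
    ∫ x in Ioi (0:ℝ), x ^ m * Real.exp (-c * x ^ 2)
      = c ^ (-((m : ℝ) + 1) / 2) * (1 / 2) * Real.Gamma (((m : ℝ) + 1) / 2) := by
  have h := integral_rpow_mul_exp_neg_mul_rpow (p := 2) (q := (m : ℝ)) (b := c)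
    two_pos (lt_of_lt_of_le neg_one_lt_zero (Nat.cast_nonneg m)) hc
  rw [← h]
  refine setIntegral_congr_fun measurableSet_Ioi fun x hx => ?_
  rw [← Real.rpow_natCast x m, ← Real.rpow_natCast x 2]
  norm_num

lemma myEven {c : ℝ} (hc : 0 < c) {m : ℕ} (hm : Even m) :
    ∫ x : ℝ, x ^ m * Real.exp (-c * x ^ 2)
      = c ^ (-((m : ℝ) + 1) / 2) * Real.Gamma (((m : ℝ) + 1) / 2) := by
  have key : (fun x : ℝ => x ^ m * Real.exp (-c * x ^ 2))
      = fun x : ℝ => |x| ^ m * Real.exp (-c * |x| ^ 2) := by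
    funext x; rw [hm.pow_abs, sq_abs]
  rw [key, integral_comp_abs (f := fun t : ℝ => t ^ m * Real.exp (-c * t ^ 2)), myIoi m hc]
  ring

lemma lhs_eval (n k : ℕ) (hn : 3 ≤ n) (c : ℕ → ℝ) (z : Fin n → ℝ) :
    (∫ b in Set.Ioi (0 : ℝ), ∫ a : ℝ,
        (∑ i, ∑ j ∈ Finset.range (k + 1), c (k - j) * (a + b * z i) ^ j) *
          Real.exp (-((n : ℝ) * (a ^ 2 + b ^ 2)) / 2) * b ^ (n - 2))
      = ∑ j ∈ Finset.range (k + 1), ∑ l ∈ Finset.range (j + 1),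
          c (k - j) * ((j.choose l : ℝ)
              * (∫ a : ℝ, a ^ l * Real.exp (-((n : ℝ) / 2) * a ^ 2))
              * (∫ b in Set.Ioi (0 : ℝ),
                  b ^ (n - 2 + (j - l)) * Real.exp (-((n : ℝ) / 2) * b ^ 2)))
            * (∑ i, (z i) ^ (j - l)) := by
  have hc : (0 : ℝ) < (n : ℝ) / 2 := by positivity
  set c₀ : ℝ := (n : ℝ) / 2 with hc₀
  -- inner integral
  have key1 : ∀ b : ℝ,
      (∫ a : ℝ, (∑ i, ∑ j ∈ Finset.range (k + 1), c (k - j) * (a + b * z i) ^ j) *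
          Real.exp (-((n : ℝ) * (a ^ 2 + b ^ 2)) / 2) * b ^ (n - 2))
      = ∑ i, ∑ j ∈ Finset.range (k + 1), ∑ l ∈ Finset.range (j + 1),
          (c (k - j) * (j.choose l : ℝ) * (z i) ^ (j - l)
              * (b ^ (n - 2 + (j - l)) * Real.exp (-c₀ * b ^ 2)))
            * (∫ a : ℝ, a ^ l * Real.exp (-c₀ * a ^ 2)) := by
    intro b
    have expand : (fun a : ℝ =>
        (∑ i, ∑ j ∈ Finset.range (k + 1), c (k - j) * (a + b * z i) ^ j) *
          Real.exp (-((n : ℝ) * (a ^ 2 + b ^ 2)) / 2) * b ^ (n - 2))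
        = fun a : ℝ => ∑ i, ∑ j ∈ Finset.range (k + 1), ∑ l ∈ Finset.range (j + 1),
            (c (k - j) * (j.choose l : ℝ) * (z i) ^ (j - l)
                * (b ^ (n - 2 + (j - l)) * Real.exp (-c₀ * b ^ 2)))
              * (a ^ l * Real.exp (-c₀ * a ^ 2)) := by
      funext a
      have he : Real.exp (-((n : ℝ) * (a ^ 2 + b ^ 2)) / 2)
          = Real.exp (-c₀ * a ^ 2) * Real.exp (-c₀ * b ^ 2) := by
        rw [← Real.exp_add]; congr 1; rw [hc₀]; ring
      rw [he]
      simp only [Finset.sum_mul]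
      refine Finset.sum_congr rfl fun i _ => ?_
      refine Finset.sum_congr rfl fun j _ => ?_
      rw [add_pow]
      simp only [Finset.sum_mul, Finset.mul_sum]
      refine Finset.sum_congr rfl fun l _ => ?_
      rw [mul_pow, pow_add]
      ring
    rw [expand]
    rw [integral_finset_sum _ (fun i _ => integrable_finset_sum _ fun j _ =>
      integrable_finset_sum _ fun l _ => (myInt l hc).const_mul _)]
    refine Finset.sum_congr rfl fun i _ => ?_
    rw [integral_finset_sum _ (fun j _ =>
      integrable_finset_sum _ fun l _ => (myInt l hc).const_mul _)]
    refine Finset.sum_congr rfl fun j _ => ?_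
    rw [integral_finset_sum _ (fun l _ => (myInt l hc).const_mul _)]
    refine Finset.sum_congr rfl fun l _ => ?_
    rw [integral_const_mul]
  -- outer integral
  calc
    _ = ∫ b in Set.Ioi (0:ℝ), ∑ i, ∑ j ∈ Finset.range (k + 1), ∑ l ∈ Finset.range (j + 1),
          (c (k - j) * (j.choose l : ℝ) * (z i) ^ (j - l)
              * (∫ a : ℝ, a ^ l * Real.exp (-c₀ * a ^ 2)))
            * (b ^ (n - 2 + (j - l)) * Real.exp (-c₀ * b ^ 2)) := by
        refine setIntegral_congr_fun measurableSet_Ioi fun b _ => ?_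
        rw [key1 b]
        refine Finset.sum_congr rfl fun i _ => Finset.sum_congr rfl fun j _ =>
          Finset.sum_congr rfl fun l _ => by ring
    _ = ∑ i, ∑ j ∈ Finset.range (k + 1), ∑ l ∈ Finset.range (j + 1),
          (c (k - j) * (j.choose l : ℝ) * (z i) ^ (j - l)
              * (∫ a : ℝ, a ^ l * Real.exp (-c₀ * a ^ 2)))
            * (∫ b in Set.Ioi (0:ℝ), b ^ (n - 2 + (j - l)) * Real.exp (-c₀ * b ^ 2)) := by
        rw [integral_finset_sum _ (fun i _ => integrable_finset_sum _ fun j _ =>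
          integrable_finset_sum _ fun l _ => ((myInt _ hc).const_mul _).integrableOn)]
        refine Finset.sum_congr rfl fun i _ => ?_
        rw [integral_finset_sum _ (fun j _ =>
          integrable_finset_sum _ fun l _ => ((myInt _ hc).const_mul _).integrableOn)]
        refine Finset.sum_congr rfl fun j _ => ?_
        rw [integral_finset_sum _ (fun l _ => ((myInt _ hc).const_mul _).integrableOn)]
        refine Finset.sum_congr rfl fun l _ => ?_
        rw [integral_const_mul]
    _ = _ := by
        rw [Finset.sum_comm]
        refine Finset.sum_congr rfl fun j _ => ?_
        rw [Finset.sum_comm]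
        refine Finset.sum_congr rfl fun l _ => ?_
        rw [Finset.mul_sum]
        refine Finset.sum_congr rfl fun i _ => by ring

lemma K_eval (n j l : ℕ) (hn : 3 ≤ n) (hl : Even l) (hlj : l ≤ j) :
    ((j.choose l : ℝ) * (∫ a : ℝ, a ^ l * Real.exp (-((n : ℝ) / 2) * a ^ 2))
        * (∫ b in Set.Ioi (0:ℝ), b ^ (n - 2 + (j - l)) * Real.exp (-((n : ℝ) / 2) * b ^ 2)))
      = (j.choose l : ℝ) * (2 : ℝ) ^ (((n : ℝ) + (j : ℝ) - 2) / 2) *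
          (n : ℝ) ^ (-((n : ℝ) + (j : ℝ)) / 2) * Real.Gamma (((l : ℝ) + 1) / 2) *
          Real.Gamma (((n : ℝ) + (j : ℝ) - (l : ℝ) - 1) / 2) := by
  have hc : (0 : ℝ) < (n : ℝ) / 2 := by positivity
  have hn0 : (0 : ℝ) < (n : ℝ) := by positivity
  have hm : ((n - 2 + (j - l) : ℕ) : ℝ) = (n : ℝ) + (j : ℝ) - (l : ℝ) - 2 := by
    have h2 : 2 ≤ n := by omega
    push_cast [Nat.cast_sub h2, Nat.cast_sub hlj]
    ring
  rw [myEven hc hl, myIoi _ hc, hm]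
  have harg : ((n : ℝ) + (j : ℝ) - (l : ℝ) - 2 + 1) / 2
      = ((n : ℝ) + (j : ℝ) - (l : ℝ) - 1) / 2 := by ring
  rw [harg]
  -- now pure rpow algebra
  have hrw : ((n:ℝ)/2) ^ (-((l : ℝ) + 1) / 2) * (((n:ℝ)/2) ^ (-((n : ℝ) + (j:ℝ) - (l:ℝ) - 2 + 1) / 2) * (1/2))
      = (2 : ℝ) ^ (((n : ℝ) + (j : ℝ) - 2) / 2) * (n : ℝ) ^ (-((n : ℝ) + (j : ℝ)) / 2) := by
    rw [← mul_assoc, ← Real.rpow_add hc]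
    have he : -((l : ℝ) + 1) / 2 + -((n : ℝ) + (j:ℝ) - (l:ℝ) - 2 + 1) / 2
        = -((n : ℝ) + (j : ℝ)) / 2 := by ring
    rw [he, Real.div_rpow hn0.le (by norm_num : (0:ℝ) ≤ 2)]
    have h2t : (2:ℝ) ^ (((n:ℝ)+(j:ℝ)-2)/2) = ((2:ℝ) ^ (-((n:ℝ)+(j:ℝ))/2))⁻¹ * (1/2) := by
      rw [show ((n:ℝ)+(j:ℝ)-2)/2 = ((n:ℝ)+(j:ℝ))/2 + (-1) by ring,
        Real.rpow_add two_pos, Real.rpow_neg_one,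
        show -((n:ℝ)+(j:ℝ))/2 = -(((n:ℝ)+(j:ℝ))/2) by ring,
        Real.rpow_neg two_pos.le, inv_inv, one_div]
    rw [h2t]
    ring
  calc (j.choose l : ℝ) * (((n:ℝ)/2) ^ (-((l : ℝ) + 1) / 2) * Real.Gamma (((l:ℝ)+1)/2))
        * (((n:ℝ)/2) ^ (-((n : ℝ) + (j:ℝ) - (l:ℝ) - 2 + 1) / 2) * (1/2)
            * Real.Gamma (((n : ℝ) + (j : ℝ) - (l : ℝ) - 1) / 2))
      = (j.choose l : ℝ) * (((n:ℝ)/2) ^ (-((l : ℝ) + 1) / 2) * (((n:ℝ)/2) ^ (-((n : ℝ) + (j:ℝ) - (l:ℝ) - 2 + 1) / 2) * (1/2)))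
          * Real.Gamma (((l:ℝ)+1)/2) * Real.Gamma (((n : ℝ) + (j : ℝ) - (l : ℝ) - 1) / 2) := by ring
    _ = _ := by rw [hrw]; ring

end LBIAux

/-- explicit form of the LBI statistic for a general polynomial score function
`h(x) = ∑_{j=0}^k c_{k-j} x^j` with `k ≥ 3`: up to a constant `B` not depending on `z`,
the LBI integral equals
`∑_{j=3}^k c_{k-j} ∑_{l even, 0 ≤ l ≤ j-3} binom(j,l) 2^{(n+j-2)/2} n^{-(n+j)/2}
   Γ((l+1)/2) Γ((n+j-l-1)/2) ∑ᵢ zᵢ^{j-l}`. -/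
theorem lbi_polynomial_score (n k : ℕ) (hn : 3 ≤ n) (hk : 3 ≤ k) (c : ℕ → ℝ) :
    ∃ B : ℝ, ∀ z : Fin n → ℝ, (∑ i, z i = 0) → (∑ i, (z i) ^ 2 = (n : ℝ)) →
      (∫ b in Set.Ioi (0 : ℝ), ∫ a : ℝ,
          (∑ i, ∑ j ∈ Finset.range (k + 1), c (k - j) * (a + b * z i) ^ j) *
            Real.exp (-((n : ℝ) * (a ^ 2 + b ^ 2)) / 2) * b ^ (n - 2))
        = (∑ j ∈ Finset.Icc 3 k, c (k - j) *
            ∑ l ∈ (Finset.range (j - 2)).filter (fun l => Even l),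
              (j.choose l : ℝ) * (2 : ℝ) ^ (((n : ℝ) + (j : ℝ) - 2) / 2) *
                (n : ℝ) ^ (-((n : ℝ) + (j : ℝ)) / 2) * Real.Gamma (((l : ℝ) + 1) / 2) *
                Real.Gamma (((n : ℝ) + (j : ℝ) - (l : ℝ) - 1) / 2) *
                (∑ i, (z i) ^ (j - l))) + B := by
  refine ⟨∑ j ∈ Finset.range (k + 1), ∑ l ∈ Finset.Ico (j - 2) (j + 1),
      c (k - j) * ((j.choose l : ℝ)
          * (∫ a : ℝ, a ^ l * Real.exp (-((n : ℝ) / 2) * a ^ 2))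
          * (∫ b in Set.Ioi (0 : ℝ),
              b ^ (n - 2 + (j - l)) * Real.exp (-((n : ℝ) / 2) * b ^ 2)))
        * (if j - l = 1 then (0:ℝ) else (n : ℝ)), fun z hz1 hz2 => ?_⟩
  rw [lhs_eval n k hn c z]
  have hsplit : ∀ f : ℕ → ℕ → ℝ,
      ∑ j ∈ Finset.range (k + 1), ∑ l ∈ Finset.range (j + 1), f j l
      = (∑ j ∈ Finset.range (k + 1), ∑ l ∈ Finset.range (j - 2), f j l)
        + ∑ j ∈ Finset.range (k + 1), ∑ l ∈ Finset.Ico (j - 2) (j + 1), f j l := by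
    intro f
    rw [← Finset.sum_add_distrib]
    refine Finset.sum_congr rfl fun j _ => ?_
    simp only [Finset.range_eq_Ico]
    exact (Finset.sum_Ico_consecutive _ (Nat.zero_le _) (by omega : j - 2 ≤ j + 1)).symm
  rw [hsplit]
  congr 1
  · -- main z-dependent part
    have hsub : Finset.Icc 3 k ⊆ Finset.range (k + 1) := by
      intro x hx
      simp only [Finset.mem_Icc] at hx
      simp only [Finset.mem_range]
      omega
    have hvan : ∀ x ∈ Finset.range (k + 1), x ∉ Finset.Icc 3 k →
        (∑ l ∈ Finset.range (x - 2),
          c (k - x) * ((x.choose l : ℝ)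
              * (∫ a : ℝ, a ^ l * Real.exp (-((n : ℝ) / 2) * a ^ 2))
              * (∫ b in Set.Ioi (0 : ℝ),
                  b ^ (n - 2 + (x - l)) * Real.exp (-((n : ℝ) / 2) * b ^ 2)))
            * (∑ i, (z i) ^ (x - l))) = 0 := by
      intro x hx hx'
      simp only [Finset.mem_range] at hx
      simp only [Finset.mem_Icc] at hx'
      have : x - 2 = 0 := by omega
      simp [this]
    rw [← Finset.sum_subset hsub hvan]
    refine Finset.sum_congr rfl fun j hj => ?_
    obtain ⟨hj3, hjk⟩ := Finset.mem_Icc.mp hj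
    rw [Finset.mul_sum]
    have hne : ∀ l ∈ Finset.range (j - 2),
        (c (k - j) * ((j.choose l : ℝ)
            * (∫ a : ℝ, a ^ l * Real.exp (-((n : ℝ) / 2) * a ^ 2))
            * (∫ b in Set.Ioi (0 : ℝ),
                b ^ (n - 2 + (j - l)) * Real.exp (-((n : ℝ) / 2) * b ^ 2)))
          * (∑ i, (z i) ^ (j - l))) ≠ 0 → Even l := by
      intro l _ h0
      rcases Nat.even_or_odd l with he | ho
      · exact he
      · exfalso; apply h0; rw [myOdd ho]; ring
    rw [← Finset.sum_filter_of_ne hne]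
    refine Finset.sum_congr rfl fun l hl => ?_
    simp only [Finset.mem_filter, Finset.mem_range] at hl
    obtain ⟨hlr, hleven⟩ := hl
    rw [K_eval n j l hn hleven (by omega)]
    ring
  · -- constant part
    refine Finset.sum_congr rfl fun j _ => Finset.sum_congr rfl fun l hl => ?_
    simp only [Finset.mem_Ico] at hl
    congr 1
    have : j - l = 0 ∨ j - l = 1 ∨ j - l = 2 := by omega
    rcases this with h | h | h <;> rw [h]
    · simp only [pow_zero, if_neg (by norm_num : ¬(0:ℕ) = 1)]
      simp [Finset.card_univ]
    · simp [hz1]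
    · simp [hz2]
end

section
/- Let n ≥ 3 and β ∈ ℝ, and set cₗ = ∫₀^∞ x^l exp(−n x²/2) dx = 2^{(l−1)/2} · n^{−(l+1)/2} · Γ((l+1)/2). Then there exists a constant B ∈ ℝ, depending only on n and β (not on z), such that for every z ∈ ℝⁿ with Σᵢ zᵢ = 0 and Σᵢ zᵢ² = n: ∫₀^∞ ∫_{-∞}^∞ Σ_{i=1}^n [ (β/2)(a + b·zᵢ)³ + (1/8)(a + b·zᵢ)⁴ ] · exp(−n(a²+b²)/2) · b^{n−2} da db = (c₀/4) · ( c_{n+2} · Σ_{i=1}^n zᵢ⁴ + 4β · c_{n+1} · Σ_{i=1}^n zᵢ³ ) + B, where c₀ = √(π/(2n)). In particular the locally best invariant statistic against the generalized hyperbolic alternatives with fixed skewness parameter β is c_{n+2} Σᵢ zᵢ⁴ + 4β c_{n+1} Σᵢ zᵢ³. -/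
open MeasureTheory

/-- `cₗ = 2^{(l-1)/2} n^{-(l+1)/2} Γ((l+1)/2)`, the value of `∫₀^∞ x^l exp(-n x²/2) dx`. -/
noncomputable def ghCoeff (n l : ℕ) : ℝ :=
  (2 : ℝ) ^ (((l : ℝ) - 1) / 2) * (n : ℝ) ^ (-((l : ℝ) + 1) / 2) * Real.Gamma (((l : ℝ) + 1) / 2)

/-!
Write `φ(x) = exp(-n x²/2)`, so that the weight factors as `φ(a) φ(b) b^(n-2)`. Expanding
`(a + t)^m` binomially, the odd moments `∫ a^j φ(a) da` vanish by symmetry and the even ones are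
`2 c_j`; hence the `a`-integral of `∑ᵢ (β/2 (a + b zᵢ)³ + 1/8 (a + b zᵢ)⁴) φ(a)` is a polynomial in
`b` whose coefficients involve the power sums of `z`. Under `∑ zᵢ = 0` and `∑ zᵢ² = n` only
`∑ zᵢ³` (with `b³`) and `∑ zᵢ⁴` (with `b⁴`) remain, and integrating `b^k` against `b^(n-2) φ(b)`
over `b > 0` gives `c_(n-2+k)`. The terms free of `z` make up `B`.
-/

open Real Set Finset

section GaussianMoments

variable {n : ℕ}

theorem integral_Ioi_pow_mul_gaussian (hn : 0 < n) (l : ℕ) :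
    ∫ x in Ioi (0 : ℝ), x ^ l * exp (-((n : ℝ) * x ^ 2) / 2) = ghCoeff n l := by
  have hl : (-1 : ℝ) < l := by linarith [(Nat.cast_nonneg l : (0 : ℝ) ≤ l)]
  have hgamma := integral_rpow_mul_exp_neg_mul_rpow two_pos hl (by positivity : (0 : ℝ) < n / 2)
  have hform : ∀ x : ℝ, x ^ (l : ℝ) * exp (-((n : ℝ) / 2) * x ^ (2 : ℝ))
      = x ^ l * exp (-((n : ℝ) * x ^ 2) / 2) := fun x => by
    rw [rpow_natCast, rpow_two]; ring_nf
  simp only [hform] at hgamma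
  rw [hgamma, ghCoeff, div_rpow (Nat.cast_nonneg n) zero_le_two]
  have hpow2 : (2 : ℝ) ^ (((l : ℝ) - 1) / 2) = 2⁻¹ / 2 ^ (-((l : ℝ) + 1) / 2) := by
    rw [eq_div_iff (by positivity), ← rpow_add two_pos,
      show ((l : ℝ) - 1) / 2 + -((l : ℝ) + 1) / 2 = -1 by ring, rpow_neg_one]
  rw [hpow2]
  ring

theorem ghCoeff_zero (n : ℕ) : ghCoeff n 0 = √(π / (2 * n)) := by
  rw [ghCoeff, Nat.cast_zero, show ((0 : ℝ) - 1) / 2 = -(1 / 2) by norm_num,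
    show -((0 : ℝ) + 1) / 2 = -(1 / 2) by norm_num, zero_add, Gamma_one_half_eq,
    rpow_neg zero_le_two, rpow_neg (Nat.cast_nonneg n), ← sqrt_eq_rpow, ← sqrt_eq_rpow,
    sqrt_div' _ (by positivity), sqrt_mul zero_le_two]
  field_simp

theorem integrable_pow_mul_gaussian (hn : 0 < n) (k : ℕ) :
    Integrable fun x : ℝ => x ^ k * exp (-((n : ℝ) * x ^ 2) / 2) := by
  have hk : (-1 : ℝ) < k := by linarith [(Nat.cast_nonneg k : (0 : ℝ) ≤ k)]
  convert integrable_rpow_mul_exp_neg_mul_sq (by positivity : (0 : ℝ) < n / 2) hk using 2 with x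
  rw [rpow_natCast]
  ring_nf

theorem integral_pow_mul_gaussian_of_even (hn : 0 < n) {k : ℕ} (hk : Even k) :
    ∫ x : ℝ, x ^ k * exp (-((n : ℝ) * x ^ 2) / 2) = 2 * ghCoeff n k := by
  rw [← integral_Ioi_pow_mul_gaussian hn, ← integral_comp_abs]
  simp only [hk.pow_abs, sq_abs]

theorem integral_pow_mul_gaussian_of_odd {k : ℕ} (hk : Odd k) :
    ∫ x : ℝ, x ^ k * exp (-((n : ℝ) * x ^ 2) / 2) = 0 := by
  have hsymm := integral_neg_eq_self (fun x : ℝ => x ^ k * exp (-((n : ℝ) * x ^ 2) / 2)) volume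
  simp only [hk.neg_pow, neg_sq, neg_mul, integral_neg] at hsymm
  linarith

theorem add_pow_mul_gaussian_eq_sum (t a : ℝ) (m : ℕ) :
    (a + t) ^ m * exp (-((n : ℝ) * a ^ 2) / 2)
      = ∑ j ∈ range (m + 1),
          t ^ (m - j) * m.choose j * (a ^ j * exp (-((n : ℝ) * a ^ 2) / 2)) := by
  rw [add_pow, sum_mul]
  exact sum_congr rfl fun j _ => by ring

theorem integrable_add_pow_mul_gaussian (hn : 0 < n) (t : ℝ) (m : ℕ) :
    Integrable fun a : ℝ => (a + t) ^ m * exp (-((n : ℝ) * a ^ 2) / 2) := by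
  simp only [add_pow_mul_gaussian_eq_sum]
  exact integrable_finsetSum _ fun j _ => (integrable_pow_mul_gaussian hn j).const_mul _

theorem integral_add_pow_mul_gaussian (hn : 0 < n) (t : ℝ) (m : ℕ) :
    ∫ a : ℝ, (a + t) ^ m * exp (-((n : ℝ) * a ^ 2) / 2)
      = ∑ j ∈ range (m + 1), t ^ (m - j) * m.choose j *
          ∫ a : ℝ, a ^ j * exp (-((n : ℝ) * a ^ 2) / 2) := by
  simp only [add_pow_mul_gaussian_eq_sum]
  rw [integral_finsetSum _ fun j _ => (integrable_pow_mul_gaussian hn j).const_mul _]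
  simp only [integral_const_mul]

theorem integral_add_pow_three_mul_gaussian (hn : 0 < n) (t : ℝ) :
    ∫ a : ℝ, (a + t) ^ 3 * exp (-((n : ℝ) * a ^ 2) / 2)
      = 2 * (3 * t * ghCoeff n 2 + t ^ 3 * ghCoeff n 0) := by
  simp only [integral_add_pow_mul_gaussian hn, sum_range_succ, sum_range_zero,
    integral_pow_mul_gaussian_of_even hn (by decide : Even 0),
    integral_pow_mul_gaussian_of_odd (by decide : Odd 1),
    integral_pow_mul_gaussian_of_even hn (by decide : Even 2),
    integral_pow_mul_gaussian_of_odd (by decide : Odd 3)]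
  norm_num [Nat.choose]
  ring

theorem integral_add_pow_four_mul_gaussian (hn : 0 < n) (t : ℝ) :
    ∫ a : ℝ, (a + t) ^ 4 * exp (-((n : ℝ) * a ^ 2) / 2)
      = 2 * (ghCoeff n 4 + 6 * t ^ 2 * ghCoeff n 2 + t ^ 4 * ghCoeff n 0) := by
  simp only [integral_add_pow_mul_gaussian hn, sum_range_succ, sum_range_zero,
    integral_pow_mul_gaussian_of_even hn (by decide : Even 0),
    integral_pow_mul_gaussian_of_odd (by decide : Odd 1),
    integral_pow_mul_gaussian_of_even hn (by decide : Even 2),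
    integral_pow_mul_gaussian_of_odd (by decide : Odd 3),
    integral_pow_mul_gaussian_of_even hn (by decide : Even 4)]
  norm_num [Nat.choose]
  ring

theorem integral_score_add_mul_gaussian (hn : 0 < n) (β t : ℝ) :
    ∫ a : ℝ, (β / 2 * (a + t) ^ 3 + 1 / 8 * (a + t) ^ 4) * exp (-((n : ℝ) * a ^ 2) / 2)
      = β * (3 * t * ghCoeff n 2 + t ^ 3 * ghCoeff n 0)
        + (ghCoeff n 4 + 6 * t ^ 2 * ghCoeff n 2 + t ^ 4 * ghCoeff n 0) / 4 := by
  simp only [add_mul, mul_assoc]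
  rw [integral_add ((integrable_add_pow_mul_gaussian hn t 3).const_mul _)
      ((integrable_add_pow_mul_gaussian hn t 4).const_mul _),
    integral_const_mul, integral_const_mul, integral_add_pow_three_mul_gaussian hn,
    integral_add_pow_four_mul_gaussian hn]
  ring

theorem integral_sum_score_mul_gaussian (hn : 0 < n) (β b : ℝ) {ι : Type*} [Fintype ι]
    (z : ι → ℝ) :
    ∫ a : ℝ, (∑ i, (β / 2 * (a + b * z i) ^ 3 + 1 / 8 * (a + b * z i) ^ 4))
        * exp (-((n : ℝ) * a ^ 2) / 2)
      = β * (3 * b * ghCoeff n 2 * ∑ i, z i + b ^ 3 * ghCoeff n 0 * ∑ i, z i ^ 3)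
        + (Fintype.card ι * ghCoeff n 4 + 6 * b ^ 2 * ghCoeff n 2 * ∑ i, z i ^ 2
          + b ^ 4 * ghCoeff n 0 * ∑ i, z i ^ 4) / 4 := by
  simp only [sum_mul]
  rw [integral_finsetSum]
  · rw [show (Fintype.card ι : ℝ) * ghCoeff n 4 = ∑ _i : ι, ghCoeff n 4 by simp]
    simp only [integral_score_add_mul_gaussian hn, mul_sum, ← sum_add_distrib, sum_div]
    exact sum_congr rfl fun i _ => by ring
  · intro i _
    simp only [add_mul, mul_assoc]
    exact ((integrable_add_pow_mul_gaussian hn _ 3).const_mul _).add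
      ((integrable_add_pow_mul_gaussian hn _ 4).const_mul _)

theorem integral_Ioi_quartic_mul_pow_mul_gaussian (hn : 0 < n) (m : ℕ)
    (K₀ K₂ K₃ K₄ : ℝ) :
    ∫ b in Ioi (0 : ℝ), (K₀ + K₂ * b ^ 2 + K₃ * b ^ 3 + K₄ * b ^ 4)
        * (b ^ m * exp (-((n : ℝ) * b ^ 2) / 2))
      = K₀ * ghCoeff n m + K₂ * ghCoeff n (m + 2) + K₃ * ghCoeff n (m + 3)
        + K₄ * ghCoeff n (m + 4) := by
  have hI : ∀ (K : ℝ) (k : ℕ),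
      IntegrableOn (fun b : ℝ => K * (b ^ k * exp (-((n : ℝ) * b ^ 2) / 2))) (Ioi 0) :=
    fun K k => ((integrable_pow_mul_gaussian hn k).const_mul K).integrableOn
  have hexpand : ∀ b : ℝ, (K₀ + K₂ * b ^ 2 + K₃ * b ^ 3 + K₄ * b ^ 4)
        * (b ^ m * exp (-((n : ℝ) * b ^ 2) / 2))
      = K₀ * (b ^ m * exp (-((n : ℝ) * b ^ 2) / 2))
        + K₂ * (b ^ (m + 2) * exp (-((n : ℝ) * b ^ 2) / 2))
        + K₃ * (b ^ (m + 3) * exp (-((n : ℝ) * b ^ 2) / 2))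
        + K₄ * (b ^ (m + 4) * exp (-((n : ℝ) * b ^ 2) / 2)) := fun b => by ring
  simp only [hexpand]
  rw [integral_add ?_ (hI _ _), integral_add ?_ (hI _ _), integral_add (hI _ _) (hI _ _)]
  · simp only [integral_const_mul, integral_Ioi_pow_mul_gaussian hn]
  · exact (hI _ _).add (hI _ _)
  · exact ((hI _ _).add (hI _ _)).add (hI _ _)

end GaussianMoments

/-- the LBI statistic against the generalized hyperbolic alternatives with fixed
skewness parameter `β`.  With `cₗ = ∫₀^∞ x^l exp(-n x²/2) dx = 2^{(l-1)/2} n^{-(l+1)/2} Γ((l+1)/2)`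
and `c₀ = √(π/(2n))`, the LBI integral of the score `(β/2)x³ + (1/8)x⁴` equals
`(c₀/4)(c_{n+2} ∑ zᵢ⁴ + 4β c_{n+1} ∑ zᵢ³) + B` for a constant `B` not depending on `z`. -/
theorem lbi_generalized_hyperbolic (n : ℕ) (hn : 3 ≤ n) (β : ℝ) :
    (∀ l : ℕ, (∫ x in Set.Ioi (0 : ℝ), x ^ l * Real.exp (-((n : ℝ) * x ^ 2) / 2)) = ghCoeff n l)
    ∧ ghCoeff n 0 = Real.sqrt (Real.pi / (2 * (n : ℝ)))
    ∧ ∃ B : ℝ, ∀ z : Fin n → ℝ, (∑ i, z i = 0) → (∑ i, (z i) ^ 2 = (n : ℝ)) →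
      (∫ b in Set.Ioi (0 : ℝ), ∫ a : ℝ,
          (∑ i, (β / 2 * (a + b * z i) ^ 3 + 1 / 8 * (a + b * z i) ^ 4)) *
            Real.exp (-((n : ℝ) * (a ^ 2 + b ^ 2)) / 2) * b ^ (n - 2))
        = ghCoeff n 0 / 4 *
            (ghCoeff n (n + 2) * (∑ i, (z i) ^ 4) + 4 * β * ghCoeff n (n + 1) * (∑ i, (z i) ^ 3))
          + B := by
  have hn₀ : 0 < n := by omega
  refine ⟨integral_Ioi_pow_mul_gaussian hn₀, ghCoeff_zero n,
    n / 4 * ghCoeff n 4 * ghCoeff n (n - 2) + 3 * n / 2 * ghCoeff n 2 * ghCoeff n n,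
    fun z hz₁ hz₂ => ?_⟩
  have hinner : ∀ b : ℝ,
      ∫ a : ℝ, (∑ i, (β / 2 * (a + b * z i) ^ 3 + 1 / 8 * (a + b * z i) ^ 4)) *
          exp (-((n : ℝ) * (a ^ 2 + b ^ 2)) / 2) * b ^ (n - 2)
        = (n / 4 * ghCoeff n 4 + 3 * n / 2 * ghCoeff n 2 * b ^ 2
            + β * ghCoeff n 0 * (∑ i, z i ^ 3) * b ^ 3 + ghCoeff n 0 / 4 * (∑ i, z i ^ 4) * b ^ 4)
          * (b ^ (n - 2) * exp (-((n : ℝ) * b ^ 2) / 2)) := fun b => by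
    have hsplit : ∀ a : ℝ, exp (-((n : ℝ) * (a ^ 2 + b ^ 2)) / 2)
        = exp (-((n : ℝ) * a ^ 2) / 2) * exp (-((n : ℝ) * b ^ 2) / 2) := fun a => by
      rw [← exp_add]; ring_nf
    simp only [hsplit, ← mul_assoc, integral_mul_const, integral_sum_score_mul_gaussian hn₀, hz₁,
      hz₂, Fintype.card_fin]
    ring
  rw [setIntegral_congr_fun measurableSet_Ioi fun b _ => hinner b,
    integral_Ioi_quartic_mul_pow_mul_gaussian hn₀, show n - 2 + 2 = n by omega,
    show n - 2 + 3 = n + 1 by omega, show n - 2 + 4 = n + 2 by omega]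
  ring
end

section
/- For every t ∈ ℝ, the integral ∫₀^∞ (e^{itu} − 1 − itu) · u^{−1} e^{−u} du converges absolutely, and exp( ∫₀^∞ (e^{itu} − 1 − itu) · u^{−1} e^{−u} du ) = e^{−it} / (1 − it). That is, the characteristic function of X = Y − 1, where Y has the exponential distribution with mean 1, has Lévy–Khintchine representation exp[∫₀^∞ (e^{itu} − 1 − itu) u^{−2} μ(du)] with Lévy measure μ(du) = u e^{−u} du on (0,∞). -/
/-!
Call `F t` the integral. Both `F` and `g t = -log (1 - i t) - i t` vanish at `t = 0`.
Differentiating under the integral sign, which the bound `2 e^{-u}` on the `t`-derivative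
`i (e^{itu} - 1) e^{-u}` of the integrand justifies, gives `F' t = i / (1 - i t) - i = g' t`.
Hence `F = g`, and `exp (g t) = e^{-it} / (1 - i t)`.
-/

open MeasureTheory Set Complex

/-- `(e^{itu} - 1 - itu) u⁻² · u e^{-u}`: the Lévy–Khintchine integrand against the Lévy measure
`u e^{-u} du`. -/
noncomputable def expLevyIntegrand (t u : ℝ) : ℂ :=
  (cexp (I * t * u) - 1 - I * t * u) * (u : ℂ)⁻¹ * (Real.exp (-u) : ℂ)

theorem norm_cexp_I_mul_ofReal_sub_one_sub_le (x : ℝ) :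
    ‖cexp (I * x) - 1 - I * x‖ ≤ 2 * |x| :=
  calc ‖cexp (I * x) - 1 - I * x‖ ≤ ‖cexp (I * x) - 1‖ + ‖I * x‖ := norm_sub_le _ _
    _ ≤ |x| + |x| := by
      gcongr
      · exact Real.norm_exp_I_mul_ofReal_sub_one_le
      · simp
    _ = 2 * |x| := by ring

theorem norm_expLevyIntegrand_le (t : ℝ) {u : ℝ} (hu : 0 < u) :
    ‖expLevyIntegrand t u‖ ≤ 2 * |t| * Real.exp (-u) := by
  have hbound := norm_cexp_I_mul_ofReal_sub_one_sub_le (t * u)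
  rw [ofReal_mul, ← mul_assoc, abs_mul, abs_of_pos hu, ← mul_assoc] at hbound
  calc ‖expLevyIntegrand t u‖
      = ‖cexp (I * t * u) - 1 - I * t * u‖ * u⁻¹ * Real.exp (-u) := by
        simp [expLevyIntegrand, abs_of_pos hu, norm_exp]
    _ ≤ 2 * |t| * u * u⁻¹ * Real.exp (-u) := by gcongr
    _ = 2 * |t| * Real.exp (-u) := by field_simp

theorem integrableOn_expLevyIntegrand (t : ℝ) : IntegrableOn (expLevyIntegrand t) (Ioi 0) := by
  refine Integrable.mono' ((integrableOn_exp_neg_Ioi 0).const_mul (2 * |t|))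
    (by unfold expLevyIntegrand; fun_prop) ?_
  filter_upwards [ae_restrict_mem measurableSet_Ioi] with u hu
  exact norm_expLevyIntegrand_le t hu

theorem hasDerivAt_expLevyIntegrand (t : ℝ) {u : ℝ} (hu : u ≠ 0) :
    HasDerivAt (expLevyIntegrand · u) (I * (cexp ((I * t - 1) * u) - cexp (-u))) t := by
  have hlin : HasDerivAt (fun s : ℝ => I * s * u) (I * u) t := by
    simpa using ((hasDerivAt_id (t : ℂ)).const_mul I).mul_const (u : ℂ) |>.comp_ofReal
  refine ((((hlin.cexp.sub_const 1).sub hlin).mul_const ((u : ℂ)⁻¹)).mul_const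
    ((Real.exp (-u) : ℝ) : ℂ)).congr_deriv ?_
  have hu' : (u : ℂ) ≠ 0 := ofReal_ne_zero.mpr hu
  have hsplit : cexp ((I * t - 1) * u) = cexp (I * t * u) * cexp (-u) := by
    rw [← exp_add]; ring_nf
  rw [ofReal_exp, ofReal_neg, hsplit]
  field_simp

theorem integral_I_mul_cexp_sub_cexp_Ioi (t : ℝ) :
    ∫ u in Ioi (0 : ℝ), I * (cexp ((I * t - 1) * u) - cexp (-u)) = I * (1 - I * t)⁻¹ - I := by
  have hre : (I * t - 1).re < 0 := by simp
  have hre' : (-1 : ℂ).re < 0 := by simp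
  have hint := integrableOn_exp_mul_complex_Ioi hre' 0
  have hval := integral_exp_mul_complex_Ioi hre' 0
  simp only [neg_one_mul] at hint hval
  rw [integral_const_mul, integral_sub (integrableOn_exp_mul_complex_Ioi hre 0) hint,
    integral_exp_mul_complex_Ioi hre, hval]
  simp only [ofReal_zero, mul_zero, neg_zero, exp_zero, neg_div, div_neg, neg_neg, one_div,
    ← inv_neg, neg_sub]
  ring

theorem hasDerivAt_integral_expLevyIntegrand (t : ℝ) :
    HasDerivAt (fun s => ∫ u in Ioi 0, expLevyIntegrand s u) (I * (1 - I * t)⁻¹ - I) t := by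
  have hderiv := hasDerivAt_integral_of_dominated_loc_of_deriv_le (μ := volume.restrict (Ioi 0))
    (F' := fun s u => I * (cexp ((I * s - 1) * u) - cexp (-u)))
    (bound := fun u => 2 * Real.exp (-u)) (x₀ := t) Filter.univ_mem
    (.of_forall fun s => (integrableOn_expLevyIntegrand s).aestronglyMeasurable)
    (integrableOn_expLevyIntegrand t) (by fun_prop) ?_
    ((integrableOn_exp_neg_Ioi 0).const_mul 2) ?_
  · exact integral_I_mul_cexp_sub_cexp_Ioi t ▸ hderiv.2
  · filter_upwards with u s _
    rw [norm_mul, norm_I, one_mul, two_mul]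
    refine (norm_sub_le _ _).trans_eq ?_
    simp [norm_exp]
  · filter_upwards [ae_restrict_mem measurableSet_Ioi] with u hu s _
    exact hasDerivAt_expLevyIntegrand s (ne_of_gt hu)

theorem one_sub_I_mul_ofReal_mem_slitPlane (t : ℝ) : 1 - I * t ∈ slitPlane :=
  mem_slitPlane_iff.2 (.inl (by simp))

theorem hasDerivAt_neg_log_one_sub_I_mul_sub_I_mul (t : ℝ) :
    HasDerivAt (fun s : ℝ => -log (1 - I * s) - I * s) (I * (1 - I * t)⁻¹ - I) t := by
  have hlin : HasDerivAt (fun s : ℝ => I * s) I t := by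
    simpa using ((hasDerivAt_id (t : ℂ)).const_mul I).comp_ofReal
  have hlog := (hlin.const_sub 1).clog_real (one_sub_I_mul_ofReal_mem_slitPlane t)
  refine (hlog.neg.sub hlin).congr_deriv ?_
  rw [div_eq_mul_inv]; ring

theorem integral_expLevyIntegrand (t : ℝ) :
    ∫ u in Ioi 0, expLevyIntegrand t u = -log (1 - I * t) - I * t := by
  refine isOpen_univ.eqOn_of_deriv_eq isPreconnected_univ
    (fun s _ => (hasDerivAt_integral_expLevyIntegrand s).differentiableAt.differentiableWithinAt)
    (fun s _ =>
      (hasDerivAt_neg_log_one_sub_I_mul_sub_I_mul s).differentiableAt.differentiableWithinAt)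
    (fun s _ => (hasDerivAt_integral_expLevyIntegrand s).deriv.trans
      (hasDerivAt_neg_log_one_sub_I_mul_sub_I_mul s).deriv.symm)
    (mem_univ 0) (by simp [expLevyIntegrand]) (mem_univ t)

/-- the Lévy–Khintchine representation of the centered exponential distribution.
For every `t ∈ ℝ`, `∫₀^∞ (e^{itu} - 1 - itu) u⁻¹ e^{-u} du` converges absolutely and its
exponential equals `e^{-it}/(1 - it)`, the characteristic function of `X = Y - 1` where `Y` is
standard exponential (Lévy measure `μ(du) = u e^{-u} du` on `(0,∞)`). -/
theorem levy_khintchine_centered_exponential (t : ℝ) :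
    IntegrableOn
      (fun u : ℝ => (Complex.exp (Complex.I * t * u) - 1 - Complex.I * t * u) * (u : ℂ)⁻¹ *
        (Real.exp (-u) : ℂ)) (Set.Ioi 0)
    ∧ Complex.exp (∫ u in Set.Ioi (0 : ℝ),
          (Complex.exp (Complex.I * t * u) - 1 - Complex.I * t * u) * (u : ℂ)⁻¹ *
            (Real.exp (-u) : ℂ))
        = Complex.exp (-(Complex.I * t)) / (1 - Complex.I * t) := by
  refine ⟨integrableOn_expLevyIntegrand t, ?_⟩
  change cexp (∫ u in Ioi 0, expLevyIntegrand t u) = _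
  rw [integral_expLevyIntegrand, sub_eq_add_neg, add_comm, ← sub_eq_add_neg, exp_sub,
    exp_log (slitPlane_ne_zero (one_sub_I_mul_ofReal_mem_slitPlane t))]
end
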